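/- Let D be a finite set of points in ℝ² whose pairwise Euclidean distances are all at least 2, let L = lift(D), let B be the set of blocking points, and let P = L ∪ B; suppose L and B are disjoint, and let m be a natural number. Then D contains an independent set of size m if and only if there exists a subset S ⊆ P with |S| = m + |B| that is in empty convex position (S is in convex position and the convex hull of S contains no point of P \ S). -/

import Mathlib

/-- The standard lifting map to the elliptic paraboloid: `(x₁, x₂) ↦ (x₁, x₂, x₁² + x₂²)`. -/
noncomputable def lift (x : EuclideanSpace ℝ (Fin 2)) : EuclideanSpace ℝ (Fin 3) :=
  (WithLp.equiv 2 (Fin 3 → ℝ)).symm ![x 0, x 1, x 0 ^ 2 + x 1 ^ 2]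

/-- The set of blocking points of `D`: midpoints `(lift c + lift c')/2` over all touching
pairs `c, c' ∈ D` (i.e. pairs with `dist c c' = 2`). -/
noncomputable def blockers (D : Set (EuclideanSpace ℝ (Fin 2))) :
    Set (EuclideanSpace ℝ (Fin 3)) :=
  {b | ∃ c ∈ D, ∃ c' ∈ D, dist c c' = 2 ∧ b = (1 / 2 : ℝ) • (lift c + lift c')}

/-!
For `p ∈ ℝ²`, the height of a point above the plane tangent to the paraboloid at `lift p` is an
affine function of the point, equal to `|d - p|²` at `lift d`; a point at which it is strictly
smaller than on all of `T` lies outside the convex hull of `T`. Taking `p = a` separates `lift a`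
from the rest of `P`. For the blocking point `b` of a touching pair `c, c'`, a point `p` on the
segment `cc'` slightly closer to `c'` separates `b` from `P \ {b, lift c'}`, because the other
centres are at distance at least `2` from both `c` and `c'`. So a subset of `P` avoiding `b` has
`b` in its hull exactly when it contains both `lift c` and `lift c'`. Hence `lift '' I ∪ B` is in
empty convex position for every independent `I`, and conversely the centres lifted into an empty
convex `S` form an independent set of size at least `|S| - |B|`.
-/

theorem dist_sq_add_smul_add {E : Type*} [NormedAddCommGroup E] [InnerProductSpace ℝ E]
    (x c c' : E) {α β : ℝ} (h : α + β = 1) :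
    dist x (α • c + β • c') ^ 2 = α * dist x c ^ 2 + β * dist x c' ^ 2 - α * β * dist c c' ^ 2 := by
  have hx : x - (α • c + β • c') = α • (x - c) + β • (x - c') := by
    rw [smul_sub, smul_sub, sub_add_sub_comm, ← add_smul, h, one_smul]
  have hc : c - c' = (x - c') - (x - c) := by abel
  rw [dist_eq_norm, dist_eq_norm, dist_eq_norm, dist_eq_norm, hx, hc]
  generalize x - c = u, x - c' = v
  rw [norm_add_sq_real, norm_sub_sq_real, norm_smul, norm_smul, real_inner_smul_left,
    real_inner_smul_right, real_inner_comm u, mul_pow, mul_pow, Real.norm_eq_abs,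
    Real.norm_eq_abs, sq_abs, sq_abs]
  obtain rfl : β = 1 - α := by linarith
  ring

section
local notation "ℝ²" => EuclideanSpace ℝ (Fin 2)
local notation "ℝ³" => EuclideanSpace ℝ (Fin 3)

noncomputable def tangentHeight (p : ℝ²) (z : ℝ³) : ℝ :=
  z 2 - 2 * (p 0 * z 0 + p 1 * z 1) + (p 0 ^ 2 + p 1 ^ 2)

theorem tangentHeight_lift (p x : ℝ²) : tangentHeight p (lift x) = dist x p ^ 2 := by
  simp only [tangentHeight, EuclideanSpace.dist_sq_eq, Fin.sum_univ_two, Real.dist_eq, sq_abs]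
  change x 0 ^ 2 + x 1 ^ 2 - 2 * (p 0 * x 0 + p 1 * x 1) + _ = _
  ring

theorem tangentHeight_add_smul (p : ℝ²) (z z' : ℝ³) {α β : ℝ} (h : α + β = 1) :
    tangentHeight p (α • z + β • z') = α * tangentHeight p z + β * tangentHeight p z' := by
  simp only [tangentHeight, PiLp.add_apply, PiLp.smul_apply, smul_eq_mul]
  obtain rfl : β = 1 - α := by linarith
  ring

theorem tangentHeight_midpoint (p : ℝ²) (z z' : ℝ³) :
    tangentHeight p ((1 / 2 : ℝ) • (z + z')) = (tangentHeight p z + tangentHeight p z') / 2 := by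
  rw [smul_add, tangentHeight_add_smul p z z' (by norm_num)]
  ring

theorem concaveOn_tangentHeight (p : ℝ²) : ConcaveOn ℝ Set.univ (tangentHeight p) :=
  ⟨convex_univ, fun z _ z' _ _ _ _ _ hab => (tangentHeight_add_smul p z z' hab).ge⟩

theorem notMem_convexHull_of_tangentHeight_lt (p : ℝ²) {T : Set ℝ³} {x : ℝ³}
    (hT : ∀ z ∈ T, tangentHeight p x < tangentHeight p z) : x ∉ convexHull ℝ T := fun hx =>
  let ⟨z, hz, hzx⟩ :=
    (concaveOn_tangentHeight p).exists_le_of_mem_convexHull (Set.subset_univ T) hx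
  (hT z hz).not_ge hzx

theorem lift_notMem_convexHull {D : Set ℝ²} {T : Set ℝ³} {a : ℝ²}
    (hT : T ⊆ lift '' D ∪ blockers D) (haT : lift a ∉ T) : lift a ∉ convexHull ℝ T := by
  refine notMem_convexHull_of_tangentHeight_lt a fun z hz => ?_
  rw [tangentHeight_lift, dist_self, sq, zero_mul]
  have hpos : ∀ x : ℝ², x ≠ a → 0 < tangentHeight a (lift x) := fun x hx => by
    rw [tangentHeight_lift]; exact pow_pos (dist_pos.2 hx) 2
  rcases hT hz with ⟨x, -, rfl⟩ | ⟨d, -, e, -, hde, rfl⟩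
  · exact hpos x (by rintro rfl; exact haT hz)
  · have hde : d ≠ e := by rintro rfl; norm_num at hde
    have hd := (sq_nonneg (dist d a)).trans_eq (tangentHeight_lift a d).symm
    have he := (sq_nonneg (dist e a)).trans_eq (tangentHeight_lift a e).symm
    rw [tangentHeight_midpoint]
    by_cases hda : d = a
    · linarith [hpos e (hda ▸ hde.symm)]
    · linarith [hpos d hda]

theorem blocker_mem_convexHull {T : Set ℝ³} {c c' : ℝ²} (hc : lift c ∈ T) (hc' : lift c' ∈ T) :
    (1 / 2 : ℝ) • (lift c + lift c') ∈ convexHull ℝ T := by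
  rw [smul_add]
  exact convex_convexHull ℝ T (subset_convexHull ℝ T hc) (subset_convexHull ℝ T hc')
    (by norm_num) (by norm_num) (by norm_num)

theorem blocker_notMem_convexHull {D : Set ℝ²} (hsep : ∀ p ∈ D, ∀ q ∈ D, p ≠ q → 2 ≤ dist p q)
    {c c' : ℝ²} (hc : c ∈ D) (hc' : c' ∈ D) (hcc : dist c c' = 2) {T : Set ℝ³}
    (hT : T ⊆ lift '' D ∪ blockers D) (hbT : (1 / 2 : ℝ) • (lift c + lift c') ∉ T)
    (hc'T : lift c' ∉ T) : (1 / 2 : ℝ) • (lift c + lift c') ∉ convexHull ℝ T := by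
  -- any point strictly between the midpoint of `cc'` and `c'` would do
  set p : ℝ² := (1 / 4 : ℝ) • c + (3 / 4 : ℝ) • c'
  have height : ∀ x, tangentHeight p (lift x) = (dist x c ^ 2 + 3 * dist x c' ^ 2 - 3) / 4 :=
    fun x => by rw [tangentHeight_lift, dist_sq_add_smul_add x c c' (by norm_num), hcc]; ring
  have sq_ge : ∀ x ∈ D, ∀ y ∈ D, x ≠ y → 4 ≤ dist x y ^ 2 := fun x hx y hy hxy => by
    nlinarith [hsep x hx y hy hxy]
  have hb : tangentHeight p ((1 / 2 : ℝ) • (lift c + lift c')) = 5 / 4 := by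
    rw [tangentHeight_midpoint, height, height, dist_self, dist_self, dist_comm c' c, hcc]; norm_num
  have near : ∀ x ∈ D, x ≠ c' → 9 / 4 ≤ tangentHeight p (lift x) := fun x hx hxc' => by
    rw [height]
    by_cases hxc : x = c
    · rw [hxc, dist_self, hcc]; norm_num
    · linarith [sq_ge x hx c hc hxc, sq_ge x hx c' hc' hxc']
  have far : ∀ x ∈ D, x ≠ c → x ≠ c' → 13 / 4 ≤ tangentHeight p (lift x) :=
    fun x hx hxc hxc' => by
      rw [height]; linarith [sq_ge x hx c hc hxc, sq_ge x hx c' hc' hxc']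
  have hc'0 : 0 ≤ tangentHeight p (lift c') := (tangentHeight_lift p c').symm ▸ sq_nonneg _
  refine notMem_convexHull_of_tangentHeight_lt p fun z hz => ?_
  rw [hb]
  rcases hT hz with ⟨x, hx, rfl⟩ | ⟨d, hd, e, he, hde, rfl⟩
  · linarith [near x hx (by rintro rfl; exact hc'T hz)]
  · have hde : d ≠ e := by rintro rfl; norm_num at hde
    rw [tangentHeight_midpoint]
    by_cases hdc' : d = c'
    · subst hdc'
      have hec : e ≠ c := by rintro rfl; exact hbT (add_comm (lift d) _ ▸ hz)
      linarith [far e he hec hde.symm]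
    by_cases hec' : e = c'
    · subst hec'
      have hdc : d ≠ c := by rintro rfl; exact hbT hz
      linarith [far d hd hdc hdc']
    linarith [near d hd hdc', near e he hec']

theorem lift_injective : Function.Injective lift := fun x y h => by
  ext i; fin_cases i
  exacts [congrArg (· 0) h, congrArg (· 1) h]

theorem blockers_finite {D : Set ℝ²} (hD : D.Finite) : (blockers D).Finite :=
  ((hD.prod hD).image fun q : ℝ² × ℝ² => (1 / 2 : ℝ) • (lift q.1 + lift q.2)).subset <| by
    rintro b ⟨c, hc, c', hc', -, rfl⟩
    exact ⟨(c, c'), ⟨hc, hc'⟩, rfl⟩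

theorem ncard_lift_image_union_blockers {D I : Set ℝ²} (hD : D.Finite)
    (hdisj : Disjoint (lift '' D) (blockers D)) (hID : I ⊆ D) :
    (lift '' I ∪ blockers D).ncard = I.ncard + (blockers D).ncard := by
  rw [Set.ncard_union_eq (hdisj.mono_left (Set.image_mono hID)) ((hD.subset hID).image _)
    (blockers_finite hD), Set.ncard_image_of_injective _ lift_injective]

theorem ncard_le_ncard_sep_add_ncard_blockers {D : Set ℝ²} {S : Set ℝ³} (hD : D.Finite)
    (hSP : S ⊆ lift '' D ∪ blockers D) :
    S.ncard ≤ {a ∈ D | lift a ∈ S}.ncard + (blockers D).ncard := by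
  have hsub : S ⊆ lift '' {a ∈ D | lift a ∈ S} ∪ blockers D := fun z hz => by
    rcases hSP hz with ⟨a, ha, rfl⟩ | hb
    exacts [Or.inl ⟨a, ⟨ha, hz⟩, rfl⟩, Or.inr hb]
  calc S.ncard ≤ (lift '' {a ∈ D | lift a ∈ S} ∪ blockers D).ncard :=
        Set.ncard_le_ncard hsub
          (((hD.subset (Set.sep_subset _ _)).image _).union (blockers_finite hD))
    _ ≤ (lift '' {a ∈ D | lift a ∈ S}).ncard + (blockers D).ncard := Set.ncard_union_le _ _
    _ = {a ∈ D | lift a ∈ S}.ncard + (blockers D).ncard := by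
        rw [Set.ncard_image_of_injective _ lift_injective]

theorem convexIndependent_lift_image_union_blockers {D I : Set ℝ²}
    (hsep : ∀ p ∈ D, ∀ q ∈ D, p ≠ q → 2 ≤ dist p q) (hdisj : Disjoint (lift '' D) (blockers D))
    (hID : I ⊆ D) (hind : ∀ p ∈ I, ∀ q ∈ I, p ≠ q → 2 < dist p q) :
    ∀ z ∈ lift '' I ∪ blockers D, z ∉ convexHull ℝ ((lift '' I ∪ blockers D) \ {z}) := by
  have hT : ∀ z, (lift '' I ∪ blockers D) \ {z} ⊆ lift '' D ∪ blockers D := fun z =>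
    Set.sdiff_subset.trans (Set.union_subset_union_left _ (Set.image_mono hID))
  have mem_of_lift_mem : ∀ x ∈ D, lift x ∈ lift '' I ∪ blockers D → x ∈ I := by
    rintro x hx (⟨y, hy, hyx⟩ | hb)
    · exact lift_injective hyx ▸ hy
    · exact (Set.disjoint_left.1 hdisj ⟨x, hx, rfl⟩ hb).elim
  rintro z (⟨a, -, rfl⟩ | ⟨c, hc, c', hc', hcc, rfl⟩)
  · exact lift_notMem_convexHull (hT _) fun h => h.2 rfl
  by_cases hc'I : c' ∈ I
  · have hcI : c ∉ I := fun hcI =>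
      (hind c hcI c' hc'I (by rintro rfl; norm_num at hcc)).ne' hcc
    rw [add_comm (lift c)]
    exact blocker_notMem_convexHull hsep hc' hc (dist_comm c c' ▸ hcc) (hT _)
      (fun h => h.2 rfl) fun h => hcI (mem_of_lift_mem c hc h.1)
  · exact blocker_notMem_convexHull hsep hc hc' hcc (hT _) (fun h => h.2 rfl)
      fun h => hc'I (mem_of_lift_mem c' hc' h.1)

theorem independent_of_emptyConvex {D : Set ℝ²} {S : Set ℝ³}
    (hsep : ∀ p ∈ D, ∀ q ∈ D, p ≠ q → 2 ≤ dist p q) (hdisj : Disjoint (lift '' D) (blockers D))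
    (hconv : ∀ p ∈ S, p ∉ convexHull ℝ (S \ {p}))
    (hempty : ∀ p ∈ (lift '' D ∪ blockers D) \ S, p ∉ convexHull ℝ S) :
    ∀ p ∈ {a ∈ D | lift a ∈ S}, ∀ q ∈ {a ∈ D | lift a ∈ S}, p ≠ q → 2 < dist p q := by
  rintro p ⟨hp, hpS⟩ q ⟨hq, hqS⟩ hpq
  refine (hsep p hp q hq hpq).lt_of_ne fun h2 => ?_
  have hb : (1 / 2 : ℝ) • (lift p + lift q) ∈ blockers D := ⟨p, hp, q, hq, h2.symm, rfl⟩
  by_cases hbS : (1 / 2 : ℝ) • (lift p + lift q) ∈ S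
  · have hne : ∀ x ∈ D, lift x ≠ (1 / 2 : ℝ) • (lift p + lift q) := fun x hx h =>
      Set.disjoint_left.1 hdisj ⟨x, hx, rfl⟩ (h ▸ hb)
    exact hconv _ hbS (blocker_mem_convexHull ⟨hpS, hne p hp⟩ ⟨hqS, hne q hq⟩)
  · exact hempty _ ⟨Or.inr hb, hbS⟩ (blocker_mem_convexHull hpS hqS)

end

/-- Let `D ⊆ ℝ²` be finite with pairwise distances at least `2`, let
`L = lift '' D`, `B` the blocking points, `P = L ∪ B`, with `L` and `B` disjoint, and let
`m : ℕ`. Then `D` contains an independent set of size `m` iff there exists `S ⊆ P` with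
`|S| = m + |B|` in empty convex position. -/
theorem independent_set_iff_empty_convex_set (D : Set (EuclideanSpace ℝ (Fin 2)))
    (hD : D.Finite) (hsep : ∀ p ∈ D, ∀ q ∈ D, p ≠ q → 2 ≤ dist p q)
    (hdisj : Disjoint (lift '' D) (blockers D)) (m : ℕ) :
    (∃ I ⊆ D, (∀ p ∈ I, ∀ q ∈ I, p ≠ q → 2 < dist p q) ∧ I.ncard = m) ↔
      ∃ S ⊆ lift '' D ∪ blockers D, S.ncard = m + (blockers D).ncard ∧
        (∀ p ∈ S, p ∉ convexHull ℝ (S \ {p})) ∧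
        ∀ p ∈ (lift '' D ∪ blockers D) \ S, p ∉ convexHull ℝ S := by
  constructor
  · rintro ⟨I, hID, hind, rfl⟩
    have hSP : lift '' I ∪ blockers D ⊆ lift '' D ∪ blockers D :=
      Set.union_subset_union_left _ (Set.image_mono hID)
    refine ⟨_, hSP, ncard_lift_image_union_blockers hD hdisj hID,
      convexIndependent_lift_image_union_blockers hsep hdisj hID hind, ?_⟩
    rintro z ⟨⟨a, -, rfl⟩ | hb, hzS⟩
    · exact lift_notMem_convexHull hSP hzS
    · exact absurd (Or.inr hb) hzS
  · rintro ⟨S, hSP, hcard, hconv, hempty⟩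
    have hm : m ≤ {a ∈ D | lift a ∈ S}.ncard := by
      have := ncard_le_ncard_sep_add_ncard_blockers hD hSP
      omega
    obtain ⟨I, hI, rfl⟩ := Set.exists_subset_card_eq hm
    exact ⟨I, hI.trans (Set.sep_subset _ _), fun p hp q hq =>
      independent_of_emptyConvex hsep hdisj hconv hempty p (hI hp) q (hI hq), rfl⟩
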